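/- Let v be a tangential differentiable vector field on S² and v_E(x) := |x| v(x/|x|). Then (v_E·∇)v_E(x) = |x| { (∇_v v)(x/|x|) − |v(x/|x|)|² (x/|x|) } for x ∈ ℝ³ \ {0}, where ∇_v v = P[(v·∇_{S²})v] is the covariant derivative of v along itself. -/

import Mathlib

open MeasureTheory Matrix
open scoped RealInnerProductSpace

noncomputable section

abbrev E3 : Type := EuclideanSpace ℝ (Fin 3)

def proj3 (y : E3) : Matrix (Fin 3) (Fin 3) ℝ :=
  Matrix.of fun i j => (if i = j then (1:ℝ) else 0) - y i * y j

def pd (f : E3 → ℝ) (x : E3) (i : Fin 3) : ℝ :=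
  fderiv ℝ f x (EuclideanSpace.single i 1)

def gradM (u : E3 → E3) (x : E3) : Matrix (Fin 3) (Fin 3) ℝ :=
  Matrix.of fun i j => fderiv ℝ (fun z => u z j) x (EuclideanSpace.single i 1)

def symM (A : Matrix (Fin 3) (Fin 3) ℝ) : Matrix (Fin 3) (Fin 3) ℝ :=
  (1/2 : ℝ) • (A + Aᵀ)

def tgradM (u : E3 → E3) (y : E3) : Matrix (Fin 3) (Fin 3) ℝ :=
  proj3 y * gradM u y

def strainS (u : E3 → E3) (y : E3) : Matrix (Fin 3) (Fin 3) ℝ :=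
  proj3 y * symM (tgradM u y) * proj3 y

def vE (v : E3 → E3) (x : E3) : E3 := ‖x‖ • v (‖x‖⁻¹ • x)

def ra (a : E3) : E3 → E3 := fun x => WithLp.toLp 2 (crossProduct a x)

def shell (ε : ℝ) : Set E3 := {x : E3 | 1 < ‖x‖ ∧ ‖x‖ < 1 + ε}

def sphM : Measure E3 := (Measure.hausdorffMeasure 2 : Measure E3).restrict (Metric.sphere (0:E3) 1)

def avg (ε : ℝ) (k : ℕ) (φ : E3 → ℝ) (y : E3) : ℝ :=
  (1/ε) * ∫ r in (1:ℝ)..(1+ε), φ (r • y) * r ^ k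

def avgV (ε : ℝ) (k : ℕ) (u : E3 → E3) (y : E3) : E3 :=
  WithLp.toLp 2 (fun j => (1/ε) * ∫ r in (1:ℝ)..(1+ε), u (r • y) j * r ^ k)

def div3 (u : E3 → E3) (x : E3) : ℝ :=
  ∑ i, fderiv ℝ (fun z => u z i) x (EuclideanSpace.single i 1)

def sdiv (F : E3 → E3) (y : E3) : ℝ :=
  ∑ j, ∑ i, proj3 y j i * fderiv ℝ (fun x => F (‖x‖⁻¹ • x) j) y (EuclideanSpace.single i 1)

def frob2 (A : Matrix (Fin 3) (Fin 3) ℝ) : ℝ := ∑ i, ∑ j, (A i j)^2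

/-! The extension `v_E` is positively 1-homogeneous, so at `x = ‖x‖ y` its derivative in a
direction tangent to the sphere through `x` is `Dv(y)`; hence `(v_E·∇)v_E(x) = ‖x‖ Dv(y)(v y)`.
On the other side, `P v = v` because `v` is tangent, and differentiating `⟪v, y⟫ = 0` along `v`
gives `⟪y, Dv(y)(v y)⟫ = -‖v y‖²`, that is `P Dv(y)(v y) = Dv(y)(v y) + ‖v y‖² y`. -/

section Radial

variable {E F : Type*} [NormedAddCommGroup E] [InnerProductSpace ℝ E]
  [NormedAddCommGroup F] [NormedSpace ℝ F]

theorem hasFDerivAt_norm_of_ne_zero {x : E} (hx : x ≠ 0) :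
    HasFDerivAt (‖·‖) (innerSL ℝ (‖x‖⁻¹ • x)) x := by
  have hx0 : ‖x‖ ≠ 0 := norm_ne_zero_iff.mpr hx
  have h := (hasStrictFDerivAt_norm_sq x).hasFDerivAt.sqrt (pow_ne_zero 2 hx0)
  simp only [Real.sqrt_sq (norm_nonneg _)] at h
  refine h.congr_fderiv ?_
  ext e
  simp only [_root_.smul_apply, coe_innerSL_apply, nsmul_eq_mul, Nat.cast_ofNat, smul_eq_mul,
    map_smul]
  field_simp

theorem hasFDerivAt_inv_norm_smul {x : E} (hx : x ≠ 0) :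
    HasFDerivAt (fun z : E => ‖z‖⁻¹ • z)
      (‖x‖⁻¹ • (ContinuousLinearMap.id ℝ E -
        (innerSL ℝ (‖x‖⁻¹ • x)).smulRight (‖x‖⁻¹ • x))) x := by
  have hx0 : ‖x‖ ≠ 0 := norm_ne_zero_iff.mpr hx
  have h := ((hasDerivAt_inv hx0).comp_hasFDerivAt x (hasFDerivAt_norm_of_ne_zero hx)).smul
    (hasFDerivAt_id x)
  refine h.congr_fderiv ?_
  ext e
  simp only [Function.comp_apply, map_smul, smul_smul, neg_mul, neg_smul, id_eq,
    _root_.add_apply, _root_.smul_apply, ContinuousLinearMap.id_apply,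
    ContinuousLinearMap.smulRight_apply, _root_.neg_apply, coe_innerSL_apply, smul_eq_mul,
    sub_eq_add_neg, smul_add, smul_neg, add_right_inj, neg_inj]
  field_simp

theorem hasFDerivAt_norm_smul_comp_inv_norm_smul {v : E → F} {x : E} (hx : x ≠ 0)
    (hv : DifferentiableAt ℝ v (‖x‖⁻¹ • x)) :
    HasFDerivAt (fun z : E => ‖z‖ • v (‖z‖⁻¹ • z))
      ((innerSL ℝ (‖x‖⁻¹ • x)).smulRight (v (‖x‖⁻¹ • x)) +
        (fderiv ℝ v (‖x‖⁻¹ • x)).comp (ContinuousLinearMap.id ℝ E -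
          (innerSL ℝ (‖x‖⁻¹ • x)).smulRight (‖x‖⁻¹ • x))) x := by
  have hx0 : ‖x‖ ≠ 0 := norm_ne_zero_iff.mpr hx
  have h := (hasFDerivAt_norm_of_ne_zero hx).smul
    (hv.hasFDerivAt.comp (f := fun z : E => ‖z‖⁻¹ • z) x (hasFDerivAt_inv_norm_smul hx))
  refine h.congr_fderiv ?_
  ext e
  simp [smul_smul, hx0, add_comm]

theorem inner_fderiv_apply_self_eq_neg_norm_sq {v : E → E} {y : E} (hy : ‖y‖ = 1)
    (hv : DifferentiableAt ℝ v y) (hvt : ∀ z : E, ‖z‖ = 1 → ⟪v z, z⟫ = 0) :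
    ⟪fderiv ℝ v y (v y), y⟫ = -‖v y‖ ^ 2 := by
  have hy0 : y ≠ 0 := ne_zero_of_norm_ne_zero (hy.trans_ne one_ne_zero)
  have hN := hasFDerivAt_inv_norm_smul hy0
  have hv' : DifferentiableAt ℝ v (‖y‖⁻¹ • y) := by simpa [hy] using hv
  have hg := (hv'.hasFDerivAt.comp (f := fun z : E => ‖z‖⁻¹ • z) y hN).inner ℝ hN
  have hg0 : (fun z : E => ⟪v (‖z‖⁻¹ • z), ‖z‖⁻¹ • z⟫) =ᶠ[nhds y] fun _ => 0 := by
    filter_upwards [isOpen_ne.mem_nhds hy0] with z hz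
    exact hvt _ (norm_smul_inv_norm hz)
  have htan : ⟪y, v y⟫ = 0 := by rw [real_inner_comm]; exact hvt y hy
  have hL := congrArg (fun L => L (v y))
    (hg.unique ((hasFDerivAt_const 0 y).congr_of_eventuallyEq hg0))
  have h : ‖v y‖ ^ 2 + ⟪fderiv ℝ v y (v y), y⟫ = 0 := by simpa [hy, htan] using hL
  linarith

theorem fderiv_norm_smul_comp_inv_norm_smul_apply {v : E → F} {x w : E} (hx : x ≠ 0)
    (hv : DifferentiableAt ℝ v (‖x‖⁻¹ • x)) (hw : ⟪‖x‖⁻¹ • x, w⟫ = 0) :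
    fderiv ℝ (fun z : E => ‖z‖ • v (‖z‖⁻¹ • z)) x w = fderiv ℝ v (‖x‖⁻¹ • x) w := by
  rw [(hasFDerivAt_norm_smul_comp_inv_norm_smul hx hv).fderiv]
  simp only [_root_.add_apply, ContinuousLinearMap.smulRight_apply, innerSL_apply_apply,
    ContinuousLinearMap.comp_apply, _root_.sub_apply, ContinuousLinearMap.id_apply, hw,
    zero_smul, sub_zero, zero_add]

end Radial

theorem vecMul_gradM {u : E3 → E3} {x : E3} (hu : DifferentiableAt ℝ u x) (w : E3) :
    vecMul (⇑w) (gradM u x) = ⇑(fderiv ℝ u x w) := by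
  ext k
  have hk : ∀ e, fderiv ℝ (fun z => u z k) x e = fderiv ℝ u x e k := fun e =>
    congrArg (· e) (((EuclideanSpace.proj k).hasFDerivAt.comp x hu.hasFDerivAt).fderiv)
  conv_rhs => rw [← (EuclideanSpace.basisFun (Fin 3) ℝ).sum_repr w]
  simp [vecMul, dotProduct, gradM, hk]

theorem proj3_mulVec (y u : E3) : proj3 y *ᵥ ⇑u = ⇑(u - ⟪y, u⟫ • y) := by
  ext j
  simp only [mulVec, dotProduct, proj3, of_apply, sub_mul, ite_mul, one_mul, zero_mul,
    Finset.sum_sub_distrib, Finset.sum_ite_eq, Finset.mem_univ, if_true, PiLp.sub_apply,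
    PiLp.smul_apply, smul_eq_mul, PiLp.inner_apply, RCLike.inner_apply, conj_trivial,
    Finset.sum_mul]
  congr 1
  exact Finset.sum_congr rfl fun _ _ => by ring

theorem proj3_transpose (y : E3) : (proj3 y)ᵀ = proj3 y := by
  ext i j
  simp [proj3, eq_comm, mul_comm]

theorem vecMul_proj3 (y u : E3) : vecMul (⇑u) (proj3 y) = ⇑(u - ⟪y, u⟫ • y) := by
  rw [← proj3_transpose, vecMul_transpose, proj3_mulVec]

/-- `(v_E·∇)v_E(x) = |x| { (∇_v v)(x/|x|) − |v(x/|x|)|² (x/|x|) }` for tangential `v`. -/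
theorem stmt10 (v : E3 → E3) (x : E3) (hx : x ≠ 0)
    (hv : DifferentiableAt ℝ v (‖x‖⁻¹ • x))
    (hvt : ∀ z : E3, ‖z‖ = 1 → ⟪v z, z⟫ = 0) :
    ∀ j : Fin 3,
      (∑ i, vE v x i * fderiv ℝ (fun z => vE v z j) x (EuclideanSpace.single i 1))
        = ‖x‖ * ((∑ k, proj3 (‖x‖⁻¹ • x) j k
              * ∑ i, v (‖x‖⁻¹ • x) i * tgradM v (‖x‖⁻¹ • x) i k)
            - ‖v (‖x‖⁻¹ • x)‖^2 * (‖x‖⁻¹ • x) j) := by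
  intro j
  set y := ‖x‖⁻¹ • x
  have hy : ‖y‖ = 1 := norm_smul_inv_norm hx
  have htan : ⟪y, v y⟫ = 0 := by rw [real_inner_comm]; exact hvt y hy
  have hvE : vE v = fun z => ‖z‖ • v (‖z‖⁻¹ • z) := rfl
  have hlhs : ∑ i, vE v x i * fderiv ℝ (fun z => vE v z j) x (EuclideanSpace.single i 1)
      = ‖x‖ * fderiv ℝ v y (v y) j := by
    change vecMul (⇑(‖x‖ • v y)) (gradM (vE v) x) j = _
    rw [vecMul_gradM (hvE ▸ hasFDerivAt_norm_smul_comp_inv_norm_smul hx hv).differentiableAt,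
      map_smul, hvE, fderiv_norm_smul_comp_inv_norm_smul_apply hx hv htan]
    rfl
  have hrhs : ∑ k, proj3 y j k * ∑ i, v y i * tgradM v y i k
      = fderiv ℝ v y (v y) j + ‖v y‖ ^ 2 * y j := by
    change (proj3 y *ᵥ vecMul ⇑(v y) (proj3 y * gradM v y)) j = _
    rw [← vecMul_vecMul, vecMul_proj3, htan, zero_smul, sub_zero, vecMul_gradM hv, proj3_mulVec,
      real_inner_comm, inner_fderiv_apply_self_eq_neg_norm_sq hy hv hvt, neg_smul, sub_neg_eq_add]
    rfl
  rw [hlhs, hrhs]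
  ring
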